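/- Let (P, C, ψ, e, ψ^C) be entwining data with M = P^{coC}_e, and let Φ : C → P be convolution invertible with Φ(e) = 1 and ψ∘(id_C ⊗ Φ) = (Φ ⊗ id_C)∘ψ^C. Then the map σ : C ⊗ C → P defined by σ(b ⊗ c) = Φ(b₍₁₎) Φ(c_A) Φ⁻¹(b₍₂₎^A) takes values in M, i.e. Δ_R(σ(b ⊗ c)) = σ(b ⊗ c) ⊗ e for all b, c ∈ C. -/
import Mathlib


open TensorProduct LinearMap

noncomputable section

namespace Entwine

variable (k : Type) [Field k] (P : Type) [Ring P] [Algebra k P]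
  (C : Type) [AddCommGroup C] [Module k C] [Coalgebra k C]

/-- coproduct of `C` -/
abbrev Δ : C →ₗ[k] C ⊗[k] C := Coalgebra.comul
/-- counit of `C` -/
abbrev ε : C →ₗ[k] k := Coalgebra.counit
/-- multiplication of `P` -/
abbrev μ : P ⊗[k] P →ₗ[k] P := LinearMap.mul' k P

variable (ψ : C ⊗[k] P →ₗ[k] P ⊗[k] C)

/-- entwining axiom `ψ∘(id⊗μ) = (μ⊗id)∘ψ₂₃∘ψ₁₂` -/
def AxMul : Prop :=
  ψ ∘ₗ map LinearMap.id (μ k P) =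
    map (μ k P) LinearMap.id
      ∘ₗ (TensorProduct.assoc k P P C).symm.toLinearMap
      ∘ₗ map LinearMap.id ψ
      ∘ₗ (TensorProduct.assoc k P C P).toLinearMap
      ∘ₗ map ψ LinearMap.id
      ∘ₗ (TensorProduct.assoc k C P P).symm.toLinearMap

/-- entwining axiom `ψ(c ⊗ 1) = 1 ⊗ c` -/
def AxOne : Prop := ∀ c : C, ψ (c ⊗ₜ (1 : P)) = (1 : P) ⊗ₜ c

/-- entwining axiom `(id⊗Δ)∘ψ = ψ₁₂∘ψ₂₃∘(Δ⊗id)` -/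
def AxComul : Prop :=
  map LinearMap.id (Δ k C) ∘ₗ ψ =
    (TensorProduct.assoc k P C C).toLinearMap
      ∘ₗ map ψ LinearMap.id
      ∘ₗ (TensorProduct.assoc k C P C).symm.toLinearMap
      ∘ₗ map LinearMap.id ψ
      ∘ₗ (TensorProduct.assoc k C C P).toLinearMap
      ∘ₗ map (Δ k C) LinearMap.id

/-- entwining axiom `(id⊗ε)∘ψ = ε⊗id` -/
def AxCounit : Prop :=
  (TensorProduct.rid k P).toLinearMap ∘ₗ map LinearMap.id (ε k C) ∘ₗ ψ =
    (TensorProduct.lid k P).toLinearMap ∘ₗ map (ε k C) LinearMap.id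

/-- `ψ` is an entwining map for the algebra `P` and the coalgebra `C` -/
def IsEntwining : Prop :=
  AxMul k P C ψ ∧ AxOne k P C ψ ∧ AxComul k P C ψ ∧ AxCounit k P C ψ

variable (e : C)

/-- `e` is a group-like element -/
def IsGrouplike : Prop :=
  Δ k C e = e ⊗ₜ[k] e ∧ ε k C e = 1

variable (ψC : C ⊗[k] C →ₗ[k] C ⊗[k] C)

/-- `(id⊗Δ)∘ψ^C = ψ^C₁₂∘ψ^C₂₃∘(Δ⊗id)` -/
def AxPsiCComul : Prop :=
  map LinearMap.id (Δ k C) ∘ₗ ψC =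
    (TensorProduct.assoc k C C C).toLinearMap
      ∘ₗ map ψC LinearMap.id
      ∘ₗ (TensorProduct.assoc k C C C).symm.toLinearMap
      ∘ₗ map LinearMap.id ψC
      ∘ₗ (TensorProduct.assoc k C C C).toLinearMap
      ∘ₗ map (Δ k C) LinearMap.id

/-- `(id⊗ε)∘ψ^C = ε⊗id` -/
def AxPsiCCounit : Prop :=
  (TensorProduct.rid k C).toLinearMap ∘ₗ map LinearMap.id (ε k C) ∘ₗ ψC =
    (TensorProduct.lid k C).toLinearMap ∘ₗ map (ε k C) LinearMap.id

/-- `ψ^C(e ⊗ c) = Δc` -/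
def AxPsiCUnit : Prop := ∀ c : C, ψC (e ⊗ₜ[k] c) = Δ k C c

/-- `(P, C, ψ, e, ψ^C)` form entwining data -/
def IsEntwiningData : Prop :=
  IsEntwining k P C ψ ∧ IsGrouplike k C e ∧
    AxPsiCComul k C ψC ∧ AxPsiCCounit k C ψC ∧ AxPsiCUnit k C e ψC

/-- the right coaction `Δ_R u = ψ(e ⊗ u)` on `P` -/
def deltaR : P →ₗ[k] P ⊗[k] C := ψ ∘ₗ TensorProduct.mk k C P e

/-- the fixed point subspace `M = P^{coC}_e`, as a submodule of `P` -/
def Msub : Submodule k P where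
  carrier := {x : P | ψ (e ⊗ₜ x) = x ⊗ₜ e}
  add_mem' := by
    intro a b ha hb
    simp only [Set.mem_setOf_eq] at *
    rw [TensorProduct.tmul_add, map_add, ha, hb, TensorProduct.add_tmul]
  zero_mem' := by
    simp only [Set.mem_setOf_eq, TensorProduct.tmul_zero, map_zero,
      TensorProduct.zero_tmul]
  smul_mem' := by
    intro r x hx
    simp only [Set.mem_setOf_eq] at *
    rw [TensorProduct.tmul_smul, map_smul, hx, TensorProduct.smul_tmul']

/-- the subspace `M ⊗ C` of `P ⊗ C` -/
def MCsub : Submodule k (P ⊗[k] C) :=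
  LinearMap.range (map (Msub k P C ψ e).subtype (LinearMap.id : C →ₗ[k] C))

variable (ρ : C ⊗[k] P →ₗ[k] P) (σ : C ⊗[k] C →ₗ[k] P)

/-- the map `ρ̂ : c ⊗ x ↦ ρ(c₍₁₎ ⊗ x_α) ⊗ c₍₂₎^α` -/
def rhat : C ⊗[k] P →ₗ[k] P ⊗[k] C :=
  map ρ LinearMap.id
    ∘ₗ (TensorProduct.assoc k C P C).symm.toLinearMap
    ∘ₗ map LinearMap.id ψ
    ∘ₗ (TensorProduct.assoc k C C P).toLinearMap
    ∘ₗ map (Δ k C) LinearMap.id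

/-- the map `σ̂ : b ⊗ c ↦ σ(b₍₁₎ ⊗ c_A) ⊗ b₍₂₎^A` -/
def shat : C ⊗[k] C →ₗ[k] P ⊗[k] C :=
  map σ LinearMap.id
    ∘ₗ (TensorProduct.assoc k C C C).symm.toLinearMap
    ∘ₗ map LinearMap.id ψC
    ∘ₗ (TensorProduct.assoc k C C C).toLinearMap
    ∘ₗ map (Δ k C) LinearMap.id

/-- multiplication of the first two factors: `x ⊗ (y ⊗ c) ↦ xy ⊗ c` -/
def mulPC : P ⊗[k] (P ⊗[k] C) →ₗ[k] P ⊗[k] C :=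
  map (μ k P) LinearMap.id ∘ₗ (TensorProduct.assoc k P P C).symm.toLinearMap

/-- the crossed product `(x ⊗ b)(y ⊗ c) = xρ(b₍₁₎⊗y_α)σ(b₍₂₎^α₍₁₎⊗c_A) ⊗ b₍₂₎^α₍₂₎^A` -/
def prodX : (P ⊗[k] C) ⊗[k] (P ⊗[k] C) →ₗ[k] P ⊗[k] C :=
  mulPC k P C
    ∘ₗ map LinearMap.id (mulPC k P C)
    ∘ₗ map LinearMap.id
        (map LinearMap.id (shat k P C ψC σ)
          ∘ₗ (TensorProduct.assoc k P C C).toLinearMap)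
    ∘ₗ map LinearMap.id
        (map (rhat k P C ψ ρ) LinearMap.id
          ∘ₗ (TensorProduct.assoc k C P C).symm.toLinearMap)
    ∘ₗ (TensorProduct.assoc k P C (P ⊗[k] C)).toLinearMap

/-- condition (i): `ρ(e,x) = x` for `x ∈ M` and `ρ(c,1) = ε(c)1` -/
def CondI : Prop :=
  (∀ x : P, x ∈ Msub k P C ψ e → ρ (e ⊗ₜ x) = x) ∧
    ∀ c : C, ρ (c ⊗ₜ (1 : P)) = ε k C c • (1 : P)

/-- condition (ii): `ρ̂` maps `C ⊗ M` into `M ⊗ C` -/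
def CondII : Prop :=
  ∀ (c : C) (x : P), x ∈ Msub k P C ψ e →
    rhat k P C ψ ρ (c ⊗ₜ x) ∈ MCsub k P C ψ e

/-- the right hand side of condition (iii): `(μ⊗id)∘(id⊗ρ̂)∘(ρ̂⊗id)` -/
def BmapIII : C ⊗[k] (P ⊗[k] P) →ₗ[k] P ⊗[k] C :=
  mulPC k P C
    ∘ₗ map LinearMap.id (rhat k P C ψ ρ)
    ∘ₗ (TensorProduct.assoc k P C P).toLinearMap
    ∘ₗ map (rhat k P C ψ ρ) LinearMap.id
    ∘ₗ (TensorProduct.assoc k C P P).symm.toLinearMap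

/-- condition (iii): twisted multiplicativity of `ρ` -/
def CondIII : Prop :=
  ∀ (c : C) (x y : P), x ∈ Msub k P C ψ e → y ∈ Msub k P C ψ e →
    rhat k P C ψ ρ (c ⊗ₜ (x * y)) = BmapIII k P C ψ ρ (c ⊗ₜ (x ⊗ₜ y))

/-- `σ` takes values in `M` -/
def SigmaIntoM : Prop := ∀ b c : C, σ (b ⊗ₜ c) ∈ Msub k P C ψ e

/-- condition (iv): `σ(e⊗c) = ε(c)1` and `σ(c₍₁₎⊗e_A) ⊗ c₍₂₎^A = 1 ⊗ c` -/
def CondIV : Prop :=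
  (∀ c : C, σ (e ⊗ₜ c) = ε k C c • (1 : P)) ∧
    ∀ c : C, shat k P C ψC σ (c ⊗ₜ e) = (1 : P) ⊗ₜ c

/-- `(ρ, σ)` are crossed product data: conditions (i)–(iv). -/
def IsCrossedData : Prop :=
  CondI k P C ψ e ρ ∧ CondII k P C ψ e ρ ∧ CondIII k P C ψ e ρ ∧
    SigmaIntoM k P C ψ e σ ∧ CondIV k P C e ψC σ

/-- left hand side of the cocycle condition (2.6) -/
def CocLHS : C ⊗[k] (C ⊗[k] C) →ₗ[k] P ⊗[k] C :=
  mulPC k P C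
    ∘ₗ map LinearMap.id (shat k P C ψC σ)
    ∘ₗ (TensorProduct.assoc k P C C).toLinearMap
    ∘ₗ map (rhat k P C ψ ρ) LinearMap.id
    ∘ₗ (TensorProduct.assoc k C P C).symm.toLinearMap
    ∘ₗ map LinearMap.id (shat k P C ψC σ)

/-- right hand side of the cocycle condition (2.6) -/
def CocRHS : C ⊗[k] (C ⊗[k] C) →ₗ[k] P ⊗[k] C :=
  mulPC k P C
    ∘ₗ map LinearMap.id (shat k P C ψC σ)
    ∘ₗ (TensorProduct.assoc k P C C).toLinearMap
    ∘ₗ map (shat k P C ψC σ) LinearMap.id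
    ∘ₗ (TensorProduct.assoc k C C C).symm.toLinearMap

/-- the cocycle condition (2.6) -/
def Cocycle : Prop := CocLHS k P C ψ ψC ρ σ = CocRHS k P C ψC σ

/-- left hand side of the twisted module condition (2.7) -/
def TwLHS : C ⊗[k] (C ⊗[k] P) →ₗ[k] P ⊗[k] C :=
  mulPC k P C
    ∘ₗ map LinearMap.id (shat k P C ψC σ)
    ∘ₗ (TensorProduct.assoc k P C C).toLinearMap
    ∘ₗ map (rhat k P C ψ ρ) LinearMap.id
    ∘ₗ (TensorProduct.assoc k C P C).symm.toLinearMap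
    ∘ₗ map LinearMap.id (rhat k P C ψ ρ)

/-- right hand side of the twisted module condition (2.7) -/
def TwRHS : C ⊗[k] (C ⊗[k] P) →ₗ[k] P ⊗[k] C :=
  mulPC k P C
    ∘ₗ map LinearMap.id (rhat k P C ψ ρ)
    ∘ₗ (TensorProduct.assoc k P C P).toLinearMap
    ∘ₗ map (shat k P C ψC σ) LinearMap.id
    ∘ₗ (TensorProduct.assoc k C C P).symm.toLinearMap

/-- the twisted module condition (2.7), for `x ∈ M` -/
def Twisted : Prop :=
  ∀ (a b : C) (x : P), x ∈ Msub k P C ψ e →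
    TwLHS k P C ψ ψC ρ σ (a ⊗ₜ (b ⊗ₜ x)) = TwRHS k P C ψ ψC ρ σ (a ⊗ₜ (b ⊗ₜ x))

end Entwine

namespace Entwine

section Cleft
variable (k : Type) [Field k] (P : Type) [Ring P] [Algebra k P]
    (C : Type) [AddCommGroup C] [Module k C] [Coalgebra k C]
    (ψ : C ⊗[k] P →ₗ[k] P ⊗[k] C) (e : C) (ψC : C ⊗[k] C →ₗ[k] C ⊗[k] C)
    (Φ Φi : C →ₗ[k] P)

/-- `Φi` is a convolution inverse of `Φ` in `Hom(C, P)` -/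
def ConvInv : Prop :=
  (μ k P ∘ₗ map Φ Φi ∘ₗ Δ k C = Algebra.linearMap k P ∘ₗ ε k C) ∧
    (μ k P ∘ₗ map Φi Φ ∘ₗ Δ k C = Algebra.linearMap k P ∘ₗ ε k C)

/-- the covariance condition `ψ∘(id⊗Φ) = (Φ⊗id)∘ψ^C` -/
def CovPhi : Prop :=
  ψ ∘ₗ map LinearMap.id Φ = map Φ LinearMap.id ∘ₗ ψC

/-- `ρ(c ⊗ u) = Φ(c₍₁₎) u_α Φ⁻¹(c₍₂₎^α)` -/
def rhoPhi : C ⊗[k] P →ₗ[k] P :=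
  μ k P
    ∘ₗ map LinearMap.id (μ k P)
    ∘ₗ map Φ (map LinearMap.id Φi)
    ∘ₗ map LinearMap.id ψ
    ∘ₗ (TensorProduct.assoc k C C P).toLinearMap
    ∘ₗ map (Δ k C) LinearMap.id

/-- `σ(b ⊗ c) = Φ(b₍₁₎) Φ(c_A) Φ⁻¹(b₍₂₎^A)` -/
def sigmaPhi : C ⊗[k] C →ₗ[k] P :=
  μ k P
    ∘ₗ map LinearMap.id (μ k P)
    ∘ₗ map Φ (map Φ Φi)
    ∘ₗ map LinearMap.id ψC
    ∘ₗ (TensorProduct.assoc k C C C).toLinearMap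
    ∘ₗ map (Δ k C) LinearMap.id

/-- `Θ : x ⊗ c ↦ x Φ(c)` -/
def Theta : P ⊗[k] C →ₗ[k] P := μ k P ∘ₗ map LinearMap.id Φ

/-- `Θ⁻¹ : u ↦ u_α Φ⁻¹(e^α₍₁₎) ⊗ e^α₍₂₎` -/
def ThetaInv : P →ₗ[k] P ⊗[k] C :=
  mulPC k P C
    ∘ₗ map LinearMap.id (map Φi LinearMap.id)
    ∘ₗ map LinearMap.id (Δ k C)
    ∘ₗ deltaR k P C ψ e

end Cleft

end Entwine

namespace Entwine

section Aux

variable (k : Type) [Field k] (P : Type) [Ring P] [Algebra k P]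
    (C : Type) [AddCommGroup C] [Module k C] [Coalgebra k C]
    (ψ : C ⊗[k] P →ₗ[k] P ⊗[k] C) (e : C) (ψC : C ⊗[k] C →ₗ[k] C ⊗[k] C)
    (Φ Φi : C →ₗ[k] P)

lemma mulPC_tmul (x : P) (t : P ⊗[k] C) :
    mulPC k P C (x ⊗ₜ t) = (LinearMap.mulLeft k x).rTensor C t := by
  induction t using TensorProduct.induction_on with
  | zero => simp
  | tmul y c => simp [mulPC, LinearMap.mul'_apply]
  | add s t hs ht => simp [tmul_add, hs, ht]

lemma psi_mulPt (hM : AxMul k P C ψ) (c : C) (u v : P) :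
    ψ (c ⊗ₜ (u * v)) =
      mulPC k P C ((map LinearMap.id ψ)
        ((TensorProduct.assoc k P C P) (ψ (c ⊗ₜ u) ⊗ₜ v))) := by
  have h := LinearMap.congr_fun hM (c ⊗ₜ (u ⊗ₜ v))
  simpa [AxMul, mulPC, LinearMap.mul'_apply] using h

lemma step_pure (x : P) (d : C) (v : P) :
    mulPC k P C ((map LinearMap.id ψ)
      ((TensorProduct.assoc k P C P) ((x ⊗ₜ d) ⊗ₜ v))) =
    (LinearMap.mulLeft k x).rTensor C (ψ (d ⊗ₜ v)) := by
  simp [mulPC_tmul]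

lemma psi_Phi (hcov : CovPhi k P C ψ ψC Φ) (c d : C) :
    ψ (c ⊗ₜ Φ d) = (map Φ LinearMap.id) (ψC (c ⊗ₜ d)) := by
  have h := LinearMap.congr_fun hcov (c ⊗ₜ d)
  simpa [CovPhi] using h

lemma psi_e_Phi (hcov : CovPhi k P C ψ ψC Φ) (hU : AxPsiCUnit k C e ψC) (d : C) :
    ψ (e ⊗ₜ Φ d) = (map Φ LinearMap.id) (Δ k C d) := by
  rw [psi_Phi k P C ψ ψC Φ hcov, hU]

lemma convPt (h : μ k P ∘ₗ map Φ Φi ∘ₗ Δ k C = Algebra.linearMap k P ∘ₗ ε k C)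
    (d : C) : μ k P ((map Φ Φi) (Δ k C d)) = ε k C d • (1 : P) := by
  have h2 := LinearMap.congr_fun h d
  simpa [Algebra.smul_def] using h2

end Aux

end Entwine
namespace Entwine

section Aux2

variable (k : Type) [Field k] (P : Type) [Ring P] [Algebra k P]
    (C : Type) [AddCommGroup C] [Module k C] [Coalgebra k C]
    (ψ : C ⊗[k] P →ₗ[k] P ⊗[k] C) (e : C) (ψC : C ⊗[k] C →ₗ[k] C ⊗[k] C)
    (Φ Φi : C →ₗ[k] P)

lemma lemA (hM : AxMul k P C ψ) (hOne : AxOne k P C ψ)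
    (hcov : CovPhi k P C ψ ψC Φ) (hU : AxPsiCUnit k C e ψC)
    (hc1 : μ k P ∘ₗ map Φ Φi ∘ₗ Δ k C = Algebra.linearMap k P ∘ₗ ε k C)
    (d : C) :
    (mulPC k P C ∘ₗ map Φ (ψ ∘ₗ map LinearMap.id Φi ∘ₗ Δ k C)) (Δ k C d)
      = ε k C d • ((1 : P) ⊗ₜ[k] e) := by
  set T : C ⊗[k] (C ⊗[k] C) →ₗ[k] P ⊗[k] C :=
    mulPC k P C ∘ₗ map Φ (ψ ∘ₗ map LinearMap.id Φi) with hT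
  have h1 : ∀ t : C ⊗[k] C,
      mulPC k P C ((map Φ (ψ ∘ₗ map LinearMap.id Φi ∘ₗ Δ k C)) t)
        = T ((Δ k C).lTensor C t) := by
    intro t
    induction t using TensorProduct.induction_on with
    | zero => simp
    | tmul a b => simp [hT]
    | add s t hs ht => simp [map_add, hs, ht]
  have h2 : ∀ t : C ⊗[k] C,
      T ((TensorProduct.assoc k C C C) ((Δ k C).rTensor C t))
        = ψ (e ⊗ₜ μ k P ((map Φ Φi) t)) := by
    intro t
    induction t using TensorProduct.induction_on with
    | zero => simp
    | tmul a b =>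
      have sub : ∀ s : C ⊗[k] C,
          T ((TensorProduct.assoc k C C C) (s ⊗ₜ b))
            = mulPC k P C ((map LinearMap.id ψ)
                ((TensorProduct.assoc k P C P) ((map Φ LinearMap.id) s ⊗ₜ Φi b))) := by
        intro s
        induction s using TensorProduct.induction_on with
        | zero => simp
        | tmul a1 a2 => simp [hT]
        | add s1 s2 hs1 hs2 =>
          simp only [add_tmul, map_add, hs1, hs2]
      rw [LinearMap.rTensor_tmul, sub, map_tmul, LinearMap.mul'_apply,
        psi_mulPt k P C ψ hM, psi_e_Phi k P C ψ e ψC Φ hcov hU]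
    | add s t hs ht => simp [hs, ht, tmul_add]
  rw [LinearMap.comp_apply, h1, ← Coalgebra.coassoc_apply, h2,
    convPt k P C Φ Φi hc1, tmul_smul, map_smul, hOne e]

end Aux2

end Entwine
namespace Entwine

section Aux3

variable (k : Type) [Field k] (P : Type) [Ring P] [Algebra k P]
    (C : Type) [AddCommGroup C] [Module k C] [Coalgebra k C]
    (ψ : C ⊗[k] P →ₗ[k] P ⊗[k] C) (e : C) (ψC : C ⊗[k] C →ₗ[k] C ⊗[k] C)
    (Φ Φi : C →ₗ[k] P)

lemma lemG (hM : AxMul k P C ψ) (hOne : AxOne k P C ψ)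
    (hcov : CovPhi k P C ψ ψC Φ) (hU : AxPsiCUnit k C e ψC)
    (hc1 : μ k P ∘ₗ map Φ Φi ∘ₗ Δ k C = Algebra.linearMap k P ∘ₗ ε k C)
    (hc2 : μ k P ∘ₗ map Φi Φ ∘ₗ Δ k C = Algebra.linearMap k P ∘ₗ ε k C)
    (d : C) :
    ψ ((map LinearMap.id Φi) (Δ k C d)) = Φi d ⊗ₜ[k] e := by
  set G : C →ₗ[k] P ⊗[k] C := ψ ∘ₗ map LinearMap.id Φi ∘ₗ Δ k C with hG
  have hGd : ∀ a : C, G a = ψ ((map LinearMap.id Φi) (Δ k C a)) := by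
    intro a; simp [hG]
  set X : C ⊗[k] (C ⊗[k] C) →ₗ[k] P ⊗[k] C :=
    mulPC k P C ∘ₗ map Φi (mulPC k P C ∘ₗ map Φ G) with hX
  set r := Coalgebra.Repr.arbitrary k d with hr
  -- way 1
  have way1 : X ((Δ k C).lTensor C (Δ k C d)) = Φi d ⊗ₜ[k] e := by
    rw [← r.eq]
    have expand : X ((Δ k C).lTensor C (∑ i ∈ r.index, r.left i ⊗ₜ[k] r.right i))
        = ∑ i ∈ r.index, ε k C (r.right i) • (Φi (r.left i) ⊗ₜ[k] e) := by
      rw [map_sum, map_sum]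
      refine Finset.sum_congr rfl fun i _ => ?_
      rw [LinearMap.lTensor_tmul, hX, LinearMap.comp_apply, map_tmul]
      have : (mulPC k P C ∘ₗ map Φ G) (Δ k C (r.right i))
          = ε k C (r.right i) • ((1 : P) ⊗ₜ[k] e) := by
        rw [hG]
        exact lemA k P C ψ e ψC Φ Φi hM hOne hcov hU hc1 (r.right i)
      rw [this, tmul_smul, map_smul, mulPC_tmul, LinearMap.rTensor_tmul,
        LinearMap.mulLeft_apply, mul_one]
    rw [expand]
    have counit : ∑ i ∈ r.index, Φi (r.left i) ⊗ₜ[k] ε k C (r.right i)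
        = Φi d ⊗ₜ[k] (1 : k) := Coalgebra.sum_map_tmul_counit_eq Φi d
    have hsum : ∑ i ∈ r.index, ε k C (r.right i) • Φi (r.left i) = Φi d := by
      have h := congrArg (TensorProduct.rid k P) counit
      rw [map_sum] at h
      simp only [TensorProduct.rid_tmul, one_smul] at h
      exact h
    calc ∑ i ∈ r.index, ε k C (r.right i) • (Φi (r.left i) ⊗ₜ[k] e)
        = (∑ i ∈ r.index, ε k C (r.right i) • Φi (r.left i)) ⊗ₜ[k] e := by
          rw [TensorProduct.sum_tmul]
          exact Finset.sum_congr rfl fun i _ => (TensorProduct.smul_tmul' _ _ _).symm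
      _ = Φi d ⊗ₜ[k] e := by rw [hsum]
  -- way 2
  have h3 : ∀ t : C ⊗[k] C,
      X ((TensorProduct.assoc k C C C) ((Δ k C).rTensor C t))
        = mulPC k P C ((map (μ k P ∘ₗ map Φi Φ ∘ₗ Δ k C) G) t) := by
    intro t
    induction t using TensorProduct.induction_on with
    | zero => simp
    | tmul a b =>
      have sub : ∀ s : C ⊗[k] C,
          X ((TensorProduct.assoc k C C C) (s ⊗ₜ b))
            = mulPC k P C (μ k P ((map Φi Φ) s) ⊗ₜ G b) := by
        intro s
        induction s using TensorProduct.induction_on with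
        | zero => simp
        | tmul a1 a2 =>
          rw [TensorProduct.assoc_tmul, hX, LinearMap.comp_apply, map_tmul,
            LinearMap.comp_apply, map_tmul, map_tmul, LinearMap.mul'_apply,
            mulPC_tmul, mulPC_tmul, mulPC_tmul, ← LinearMap.comp_apply,
            ← LinearMap.rTensor_comp, ← LinearMap.mulLeft_mul]
        | add s1 s2 hs1 hs2 =>
          simp only [add_tmul, map_add, hs1, hs2, TensorProduct.add_tmul]
      rw [LinearMap.rTensor_tmul, sub, map_tmul]
      simp
    | add s t hs ht => simp [map_add, hs, ht, tmul_add]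
  have way2 : X ((Δ k C).lTensor C (Δ k C d)) = G d := by
    rw [← Coalgebra.coassoc_apply, h3, ← r.eq, map_sum, map_sum]
    have expand : ∀ i ∈ r.index,
        mulPC k P C ((map (μ k P ∘ₗ map Φi Φ ∘ₗ Δ k C) G) (r.left i ⊗ₜ[k] r.right i))
          = ε k C (r.left i) • G (r.right i) := by
      intro i _
      rw [map_tmul, LinearMap.comp_apply, LinearMap.comp_apply,
        convPt k P C Φi Φ hc2, ← TensorProduct.smul_tmul', map_smul, mulPC_tmul]
      simp
    rw [Finset.sum_congr rfl expand]
    have counit : ∑ i ∈ r.index, ε k C (r.left i) ⊗ₜ[k] G (r.right i)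
        = (1 : k) ⊗ₜ[k] G d := Coalgebra.sum_counit_tmul_map_eq G d
    have h := congrArg (TensorProduct.lid k (P ⊗[k] C)) counit
    rw [map_sum] at h
    simp only [TensorProduct.lid_tmul, one_smul] at h
    exact h
  rw [← hGd, ← way2, way1]

end Aux3

end Entwine
namespace Entwine

section Aux4

variable (k : Type) [Field k] (P : Type) [Ring P] [Algebra k P]
    (C : Type) [AddCommGroup C] [Module k C] [Coalgebra k C]
    (ψ : C ⊗[k] P →ₗ[k] P ⊗[k] C) (e : C) (ψC : C ⊗[k] C →ₗ[k] C ⊗[k] C)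
    (Φ Φi : C →ₗ[k] P)

lemma lemK (hM : AxMul k P C ψ) (hOne : AxOne k P C ψ)
    (hcov : CovPhi k P C ψ ψC Φ) (hU : AxPsiCUnit k C e ψC)
    (hcc : AxPsiCComul k C ψC)
    (hc1 : μ k P ∘ₗ map Φ Φi ∘ₗ Δ k C = Algebra.linearMap k P ∘ₗ ε k C)
    (hc2 : μ k P ∘ₗ map Φi Φ ∘ₗ Δ k C = Algebra.linearMap k P ∘ₗ ε k C)
    (a c : C) :
    ψ ((map LinearMap.id
        ((μ k P ∘ₗ map Φ Φi ∘ₗ ψC) ∘ₗ (TensorProduct.mk k C C).flip c)) (Δ k C a))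
      = (μ k P ∘ₗ map Φ Φi ∘ₗ ψC) (a ⊗ₜ c) ⊗ₜ[k] e := by
  set g : C ⊗[k] C →ₗ[k] P := μ k P ∘ₗ map Φ Φi ∘ₗ ψC with hg
  set gc : C →ₗ[k] P := g ∘ₗ (TensorProduct.mk k C C).flip c with hgc
  set ψCc : C →ₗ[k] C ⊗[k] C := ψC ∘ₗ (TensorProduct.mk k C C).flip c with hψCc
  set Z₂ : (C ⊗[k] C) ⊗[k] C →ₗ[k] P ⊗[k] C :=
    mulPC k P C ∘ₗ map LinearMap.id ψ ∘ₗ (TensorProduct.assoc k P C P).toLinearMap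
      ∘ₗ map (map Φ LinearMap.id) Φi with hZ
  have Ka : ∀ t : C ⊗[k] C,
      ψ ((map LinearMap.id gc) t)
        = Z₂ ((map ψC LinearMap.id)
            ((TensorProduct.assoc k C C C).symm ((map LinearMap.id ψCc) t))) := by
    intro t
    induction t using TensorProduct.induction_on with
    | zero => simp
    | tmul a1 a2 =>
      have sub : ∀ w : C ⊗[k] C,
          ψ (a1 ⊗ₜ μ k P ((map Φ Φi) w))
            = Z₂ ((map ψC LinearMap.id)
                ((TensorProduct.assoc k C C C).symm (a1 ⊗ₜ w))) := by
        intro w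
        induction w using TensorProduct.induction_on with
        | zero => simp
        | tmul u v =>
          rw [map_tmul, LinearMap.mul'_apply, psi_mulPt k P C ψ hM,
            psi_Phi k P C ψ ψC Φ hcov]
          simp [hZ]
        | add w1 w2 hw1 hw2 => simp only [map_add, tmul_add, hw1, hw2]
      have : (map (LinearMap.id (M := C)) gc) (a1 ⊗ₜ a2)
          = a1 ⊗ₜ[k] μ k P ((map Φ Φi) (ψC (a2 ⊗ₜ c))) := by
        simp [hgc, hg]
      rw [this, sub (ψC (a2 ⊗ₜ c))]
      simp [hψCc]
    | add t1 t2 h1 h2 => simp only [map_add, h1, h2]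
  have Kc : ∀ w : C ⊗[k] C,
      Z₂ ((TensorProduct.assoc k C C C).symm ((map LinearMap.id (Δ k C)) w))
        = μ k P ((map Φ Φi) w) ⊗ₜ[k] e := by
    intro w
    induction w using TensorProduct.induction_on with
    | zero => simp
    | tmul x y =>
      have sub : ∀ s : C ⊗[k] C,
          Z₂ ((TensorProduct.assoc k C C C).symm (x ⊗ₜ s))
            = (LinearMap.mulLeft k (Φ x)).rTensor C (ψ ((map LinearMap.id Φi) s)) := by
        intro s
        induction s using TensorProduct.induction_on with
        | zero => simp
        | tmul y1 y2 => simp [hZ, mulPC_tmul]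
        | add s1 s2 hs1 hs2 => simp only [map_add, tmul_add, hs1, hs2]
      simp only [map_tmul, LinearMap.id_coe, id_eq]
      rw [sub (Δ k C y), lemG k P C ψ e ψC Φ Φi hM hOne hcov hU hc1 hc2]
      simp [LinearMap.mul'_apply]
    | add w1 w2 h1 h2 => simp only [map_add, tmul_add, add_tmul, h1, h2]
  have conn : ∀ s : C ⊗[k] C,
      (map LinearMap.id ψCc) s
        = (map LinearMap.id ψC) ((TensorProduct.assoc k C C C) (s ⊗ₜ c)) := by
    intro s
    induction s using TensorProduct.induction_on with
    | zero => simp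
    | tmul a1 a2 => simp [hψCc]
    | add s1 s2 hs1 hs2 => simp only [map_add, add_tmul, hs1, hs2]
  have Kb : (map ψC LinearMap.id)
      ((TensorProduct.assoc k C C C).symm ((map LinearMap.id ψCc) (Δ k C a)))
      = (TensorProduct.assoc k C C C).symm ((map LinearMap.id (Δ k C)) (ψC (a ⊗ₜ c))) := by
    have h := LinearMap.congr_fun hcc (a ⊗ₜ c)
    simp only [AxPsiCComul, LinearMap.comp_apply, LinearEquiv.coe_coe, map_tmul,
      LinearMap.id_coe, id_eq] at h
    rw [conn, LinearEquiv.eq_symm_apply]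
    exact h.symm
  rw [Ka, Kb, Kc]
  simp [hg]

end Aux4

end Entwine
namespace Entwine

set_option maxHeartbeats 1000000 in
/-- For a convolution invertible `Φ : C → P` with `Φ(e) = 1`
intertwining `ψ` and `ψ^C`, the map `σ(b ⊗ c) = Φ(b₍₁₎)Φ(c_A)Φ⁻¹(b₍₂₎^A)` takes
values in `M`, i.e. `Δ_R(σ(b⊗c)) = σ(b⊗c) ⊗ e`. -/
theorem sigmaPhi_into_M
    (k : Type) [Field k] (P : Type) [Ring P] [Algebra k P]
    (C : Type) [AddCommGroup C] [Module k C] [Coalgebra k C]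
    (ψ : C ⊗[k] P →ₗ[k] P ⊗[k] C) (e : C) (ψC : C ⊗[k] C →ₗ[k] C ⊗[k] C)
    (Φ Φi : C →ₗ[k] P)
    (hdata : IsEntwiningData k P C ψ e ψC)
    (hconv : ConvInv k P C Φ Φi)
    (hΦe : Φ e = 1)
    (hcov : CovPhi k P C ψ ψC Φ) :
    ∀ b c : C,
      deltaR k P C ψ e (sigmaPhi k P C ψC Φ Φi (b ⊗ₜ c)) =
        sigmaPhi k P C ψC Φ Φi (b ⊗ₜ c) ⊗ₜ[k] e := by
  obtain ⟨⟨hM, hOne, hComul, hCounit⟩, hGrp, hcc, hccounit, hU⟩ := hdata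
  obtain ⟨hc1, hc2⟩ := hconv
  intro b c
  set r := Coalgebra.Repr.arbitrary k b with hr
  have hσ : sigmaPhi k P C ψC Φ Φi (b ⊗ₜ c)
      = ∑ i ∈ r.index,
          Φ (r.left i) * μ k P ((map Φ Φi) (ψC (r.right i ⊗ₜ c))) := by
    rw [sigmaPhi]
    simp only [LinearMap.comp_apply, map_tmul, LinearMap.id_coe, id_eq]
    rw [← r.eq, TensorProduct.sum_tmul]
    simp only [map_sum, LinearEquiv.coe_coe, TensorProduct.assoc_tmul, map_tmul,
      LinearMap.id_coe, id_eq, LinearMap.mul'_apply]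
  have subV : ∀ (s : C ⊗[k] C) (r' : C),
      mulPC k P C ((map LinearMap.id ψ) ((TensorProduct.assoc k P C P)
        ((map Φ LinearMap.id) s ⊗ₜ μ k P ((map Φ Φi) (ψC (r' ⊗ₜ c))))))
      = (mulPC k P C ∘ₗ map Φ (ψ ∘ₗ map LinearMap.id
          ((μ k P ∘ₗ map Φ Φi ∘ₗ ψC) ∘ₗ (TensorProduct.mk k C C).flip c)))
          ((TensorProduct.assoc k C C C) (s ⊗ₜ r')) := by
    intro s r'
    induction s using TensorProduct.induction_on with
    | zero => simp
    | tmul a1 a2 => simp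
    | add s1 s2 hs1 hs2 => simp only [map_add, add_tmul, hs1, hs2]
  have step1 : ∀ i : r.ι,
      ψ (e ⊗ₜ (Φ (r.left i) * μ k P ((map Φ Φi) (ψC (r.right i ⊗ₜ c)))))
      = (mulPC k P C ∘ₗ map Φ (ψ ∘ₗ map LinearMap.id
          ((μ k P ∘ₗ map Φ Φi ∘ₗ ψC) ∘ₗ (TensorProduct.mk k C C).flip c)))
          ((TensorProduct.assoc k C C C) (Δ k C (r.left i) ⊗ₜ r.right i)) := by
    intro i
    rw [psi_mulPt k P C ψ hM, psi_e_Phi k P C ψ e ψC Φ hcov hU, subV]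
  have step2 : ∀ i : r.ι,
      (mulPC k P C ∘ₗ map Φ (ψ ∘ₗ map LinearMap.id
          ((μ k P ∘ₗ map Φ Φi ∘ₗ ψC) ∘ₗ (TensorProduct.mk k C C).flip c)))
          (r.left i ⊗ₜ Δ k C (r.right i))
      = (Φ (r.left i) * μ k P ((map Φ Φi) (ψC (r.right i ⊗ₜ c)))) ⊗ₜ[k] e := by
    intro i
    rw [LinearMap.comp_apply, map_tmul, LinearMap.comp_apply,
      lemK k P C ψ e ψC Φ Φi hM hOne hcov hU hcc hc1 hc2 (r.right i) c,
      mulPC_tmul, LinearMap.rTensor_tmul, LinearMap.mulLeft_apply]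
    simp
  have coass : (TensorProduct.assoc k C C C) ((Δ k C).rTensor C (Δ k C b))
      = (Δ k C).lTensor C (Δ k C b) := Coalgebra.coassoc_apply b
  calc deltaR k P C ψ e (sigmaPhi k P C ψC Φ Φi (b ⊗ₜ c))
      = ψ (e ⊗ₜ sigmaPhi k P C ψC Φ Φi (b ⊗ₜ c)) := by simp [deltaR]
    _ = ∑ i ∈ r.index,
          ψ (e ⊗ₜ (Φ (r.left i) * μ k P ((map Φ Φi) (ψC (r.right i ⊗ₜ c))))) := by
        rw [hσ, tmul_sum, map_sum]
    _ = (mulPC k P C ∘ₗ map Φ (ψ ∘ₗ map LinearMap.id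
          ((μ k P ∘ₗ map Φ Φi ∘ₗ ψC) ∘ₗ (TensorProduct.mk k C C).flip c)))
          ((TensorProduct.assoc k C C C) ((Δ k C).rTensor C (Δ k C b))) := by
        rw [← r.eq, map_sum, map_sum, map_sum]
        exact Finset.sum_congr rfl fun i _ => by rw [step1 i, LinearMap.rTensor_tmul]
    _ = (mulPC k P C ∘ₗ map Φ (ψ ∘ₗ map LinearMap.id
          ((μ k P ∘ₗ map Φ Φi ∘ₗ ψC) ∘ₗ (TensorProduct.mk k C C).flip c)))
          ((Δ k C).lTensor C (Δ k C b)) := by rw [coass]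
    _ = ∑ i ∈ r.index,
          (Φ (r.left i) * μ k P ((map Φ Φi) (ψC (r.right i ⊗ₜ c)))) ⊗ₜ[k] e := by
        rw [← r.eq, map_sum, map_sum]
        exact Finset.sum_congr rfl fun i _ => by
          rw [LinearMap.lTensor_tmul, step2 i]
    _ = sigmaPhi k P C ψC Φ Φi (b ⊗ₜ c) ⊗ₜ[k] e := by
        rw [hσ, TensorProduct.sum_tmul]

end Entwine
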